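/- The tetrahedron index satisfies the 'triality' symmetry I_Δ(m,e)(q) = (−q^{1/2})^{−e} I_Δ(e, −e−m)(q) as an identity of formal Laurent series in q^{1/2}. -/

import Mathlib

open HahnSeries

/-- `(q;q)_n = ∏_{i=1}^n (1−q^i)` as a power series in the variable `X = q^{1/2}`
(so `q = X²`). -/
noncomputable def qPochhammer' (n : ℕ) : PowerSeries ℤ :=
  ∏ i ∈ Finset.range n, (1 - (PowerSeries.X : PowerSeries ℤ) ^ (2 * (i + 1)))

/-- `1/(q;q)_n` as a formal Laurent series in `q^{1/2}`, with the convention that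
it is `0` for `n < 0`.  Since `(q;q)_n` has constant coefficient `1`, it is
invertible in `ℤ[[q]]`. -/
noncomputable def qPochhammerInv (n : ℤ) : LaurentSeries ℤ :=
  if n < 0 then 0
  else HahnSeries.ofPowerSeries ℤ ℤ (PowerSeries.invOfUnit (qPochhammer' n.toNat) 1)

/-- The `n`-th summand `(−1)^n q^{n(n+1)/2 − (n+e/2)m} / ((q;q)_n (q;q)_{n+e})`
of the tetrahedron index `I_Δ(m,e)(q)`, as a formal Laurent series in `q^{1/2}`:
the exponent of `q^{1/2}` is `n(n+1) − (2n+e)m`. -/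
noncomputable def tetraTerm (m e n : ℤ) : LaurentSeries ℤ :=
  HahnSeries.single (n * (n + 1) - (2 * n + e) * m) ((((-1 : ℤˣ) ^ n : ℤˣ) : ℤ)) *
    qPochhammerInv n * qPochhammerInv (n + e)

/-!
Let `G_N = ∑_k (-1)^k q^{k(k+1)/2 + N k} / (q;q)_k`, Euler's expansion of `(q^{N+1}; q)_∞`.
Both `N ↦ G_N` and `N ↦ 1/(q;q)_N` (which is `0` for `N < 0`) satisfy
`x_N = (1 - q^{N+1}) x_{N+1}`, so `G_N = G_0 / (q;q)_N` for every `N ∈ ℤ`. Hence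
`G_0 · I_Δ(m,e) = ∑_{n,k ≥ 0} (-1)^{n+k} q^{E(n,k)} / ((q;q)_n (q;q)_k)` with
`E(n,k) = n(n+1)/2 - (n+e/2)m + k(k+1)/2 + (n+e)k`, a double sum invariant under
`(n, k, m, e) ↦ (k, n, -e, -m)`; cancelling `G_0 ≠ 0` gives the duality
`I_Δ(m,e) = I_Δ(-e,-m)`. The shift `n ↦ n + e` of the summation index gives
`I_Δ(m,e) = (-q^{1/2})^{-e} I_Δ(m+e,-e)`, and the two together give triality.
-/

open Filter

namespace HahnSeries.SummableFamily

variable {R α β : Type*} [AddCommMonoid R]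

def ofLowerBound (s : α → LaurentSeries R) (f : α → ℤ) (hf : Tendsto f cofinite atTop)
    (hs : ∀ i, ∀ g < f i, (s i).coeff g = 0) : SummableFamily ℤ R α where
  toFun := s
  isPWO_iUnion_support' := by
    obtain ⟨b, hb⟩ := hf.isBoundedUnder_ge_atTop.bddBelow_range_of_cofinite
    refine (BddBelow.isWF ⟨b, ?_⟩).isPWO
    intro g hmem
    obtain ⟨i, hi⟩ := Set.mem_iUnion.1 hmem
    by_contra! hg
    exact hi (hs i g (hg.trans_le (hb ⟨i, rfl⟩)))
  finite_co_support' g := by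
    refine (eventually_cofinite.1 (hf.eventually_gt_atTop g)).subset fun i hi => ?_
    exact fun hgi => hi (hs i g hgi)

@[simp]
theorem ofLowerBound_apply (s : α → LaurentSeries R) (f : α → ℤ)
    (hf : Tendsto f cofinite atTop) (hs : ∀ i, ∀ g < f i, (s i).coeff g = 0) (i : α) :
    ofLowerBound s f hf hs i = s i := rfl

variable {Γ : Type*} [PartialOrder Γ]

theorem tsum_coeff [TopologicalSpace R] (s : SummableFamily Γ R α) (g : Γ) :
    ∑' i, (s i).coeff g = s.hsum.coeff g := by
  rw [coeff_hsum, tsum_eq_finsum (s.finite_co_support g)]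

theorem hsum_eq_hsum_of_rows (s : SummableFamily Γ R (α × β))
    (t : α → SummableFamily Γ R β) (ht : ∀ a b, t a b = s (a, b))
    (u : SummableFamily Γ R α) (hu : ∀ a, u a = (t a).hsum) : u.hsum = s.hsum := by
  ext g
  simp only [coeff_hsum, hu, ht]
  exact (finsum_curry _ (s.finite_co_support g)).symm

end HahnSeries.SummableFamily

theorem Int.tendsto_cofinite_quadratic (b c : ℤ) :
    Tendsto (fun n : ℤ => n * n + b * n + c) cofinite atTop := by
  have key : ∀ l : Filter ℤ, Tendsto (fun n : ℤ => n * (n + b)) l atTop →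
      Tendsto (fun n : ℤ => n * n + b * n + c) l atTop := fun l h =>
    (tendsto_atTop_add_const_right l c h).congr fun n => by ring
  rw [Int.cofinite_eq, tendsto_sup]
  exact ⟨key _ (tendsto_id.atBot_mul_atBot₀ (tendsto_atBot_add_const_right _ b tendsto_id)),
    key _ (tendsto_id.atTop_mul_atTop₀ (tendsto_atTop_add_const_right _ b tendsto_id))⟩

theorem Filter.Tendsto.cofinite_prod_add {α β : Type*} {f : α → ℤ} {g : β → ℤ}
    (hf : Tendsto f cofinite atTop) (hg : Tendsto g cofinite atTop) :
    Tendsto (fun p : α × β => f p.1 + g p.2) cofinite atTop := by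
  obtain ⟨A, hA⟩ := hf.isBoundedUnder_ge_atTop.bddBelow_range_of_cofinite
  obtain ⟨B, hB⟩ := hg.isBoundedUnder_ge_atTop.bddBelow_range_of_cofinite
  refine tendsto_atTop.2 fun c => eventually_cofinite.2 ?_
  refine ((eventually_cofinite.1 (tendsto_atTop.1 hf (c - B))).prod
    (eventually_cofinite.1 (tendsto_atTop.1 hg (c - A)))).subset ?_
  rintro ⟨a, b⟩ h
  have ha := hA ⟨a, rfl⟩
  have hb := hB ⟨b, rfl⟩
  simp only [Set.mem_ofPred_eq, Set.mem_prod, not_le] at h ⊢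
  constructor <;> linarith

namespace LaurentSeries

variable {R : Type*}

theorem coeff_single_mul_eq_zero_of_lt [Semiring R] {x : LaurentSeries R}
    (hx : x ∈ (ofPowerSeries ℤ R).rangeS) (r : R) {E g : ℤ} (h : g < E) :
    (single E r * x).coeff g = 0 := by
  obtain ⟨p, rfl⟩ := hx
  rw [coeff_single_mul, PowerSeries.coeff_coe, if_pos (by omega), mul_zero]

theorem one_sub_single_ne_zero [Ring R] [Nontrivial R] {E : ℤ} (hE : 0 < E) :
    (1 - single E 1 : LaurentSeries R) ≠ 0 := fun h => by
  simpa [coeff_single, hE.ne] using congrArg (coeff · 0) h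

theorem eq_of_recursion [CommRing R] [IsDomain R] {x y : ℤ → LaurentSeries R}
    (hx : ∀ N, x N = (1 - single (2 * (N + 1)) 1) * x (N + 1))
    (hy : ∀ N, y N = (1 - single (2 * (N + 1)) 1) * y (N + 1)) (h0 : x 0 = y 0) (N : ℤ) :
    x N = y N := by
  induction N using Int.induction_on with
  | zero => exact h0
  | succ i ih =>
    refine mul_left_cancel₀ (one_sub_single_ne_zero (E := 2 * ((i : ℤ) + 1)) (by omega)) ?_
    rw [← hx, ← hy, ih]
  | pred i ih =>
    rw [hx, hy, sub_add_cancel, ih]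

end LaurentSeries

open LaurentSeries

theorem qPochhammerInv_of_neg {n : ℤ} (hn : n < 0) : qPochhammerInv n = 0 := if_pos hn

theorem qPochhammerInv_mem_rangeS (n : ℤ) :
    qPochhammerInv n ∈ (ofPowerSeries ℤ ℤ).rangeS := by
  unfold qPochhammerInv
  split_ifs
  · exact zero_mem _
  · exact ⟨_, rfl⟩

theorem ofPowerSeries_qPochhammer'_mul_qPochhammerInv (N : ℕ) :
    ofPowerSeries ℤ ℤ (qPochhammer' N) * qPochhammerInv N = 1 := by
  have hconst : PowerSeries.constantCoeff (qPochhammer' N) = 1 := by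
    simp [qPochhammer', map_prod]
  rw [qPochhammerInv, if_neg (by omega), Int.toNat_natCast, ← map_mul,
    PowerSeries.mul_invOfUnit _ _ (by simp [hconst]), map_one]

theorem qPochhammerInv_zero : qPochhammerInv 0 = 1 := by
  simpa [qPochhammer'] using ofPowerSeries_qPochhammer'_mul_qPochhammerInv 0

theorem qPochhammerInv_eq_mul_succ (N : ℤ) :
    qPochhammerInv N = (1 - single (2 * (N + 1)) 1) * qPochhammerInv (N + 1) := by
  rcases lt_trichotomy N (-1) with hN | rfl | hN
  · rw [qPochhammerInv_of_neg (by omega), qPochhammerInv_of_neg (by omega : N + 1 < 0), mul_zero]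
  · simp [qPochhammerInv_of_neg]
  lift N to ℕ using by omega
  have hsucc : ofPowerSeries ℤ ℤ (qPochhammer' (N + 1)) =
      ofPowerSeries ℤ ℤ (qPochhammer' N) * (1 - single (2 * ((N : ℤ) + 1)) 1) := by
    rw [qPochhammer', Finset.prod_range_succ, map_mul, map_sub, map_one, ofPowerSeries_X_pow]
    push_cast
    rfl
  have hinv := ofPowerSeries_qPochhammer'_mul_qPochhammerInv (N + 1)
  push_cast at hinv
  calc qPochhammerInv N
      = qPochhammerInv N *
          (ofPowerSeries ℤ ℤ (qPochhammer' (N + 1)) * qPochhammerInv (N + 1)) := by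
        rw [hinv, mul_one]
    _ = (ofPowerSeries ℤ ℤ (qPochhammer' N) * qPochhammerInv N) *
          ((1 - single (2 * ((N : ℤ) + 1)) 1) * qPochhammerInv (N + 1)) := by
        rw [hsucc]; ring
    _ = _ := by rw [ofPowerSeries_qPochhammer'_mul_qPochhammerInv, one_mul]

/-- Euler's expansion of `(q^{N+1}; q)_∞ = ∑_k (-1)^k q^{k(k+1)/2 + N k} / (q;q)_k`. -/
noncomputable def eulerTerm (N k : ℤ) : LaurentSeries ℤ :=
  single (k * (k + 1) + 2 * N * k) ((((-1 : ℤˣ) ^ k : ℤˣ) : ℤ)) * qPochhammerInv k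

noncomputable def eulerFamily (N : ℤ) : SummableFamily ℤ ℤ ℤ :=
  .ofLowerBound (eulerTerm N) (fun k => k * (k + 1) + 2 * N * k)
    ((Int.tendsto_cofinite_quadratic (2 * N + 1) 0).congr fun k => by ring)
    fun k _ => coeff_single_mul_eq_zero_of_lt (qPochhammerInv_mem_rangeS k) _

@[simp]
theorem eulerFamily_apply (N k : ℤ) : eulerFamily N k = eulerTerm N k := rfl

noncomputable def eulerSeries (N : ℤ) : LaurentSeries ℤ := (eulerFamily N).hsum

theorem eulerTerm_sub_eulerTerm_succ (N k : ℤ) :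
    eulerTerm N k - eulerTerm (N + 1) k =
      -single (2 * (N + 1)) 1 * eulerTerm (N + 1) (k - 1) := by
  have hpoch := qPochhammerInv_eq_mul_succ (k - 1)
  rw [sub_add_cancel] at hpoch
  have hsign : -((((-1 : ℤˣ) ^ (k - 1) : ℤˣ) : ℤ)) = (((-1 : ℤˣ) ^ k : ℤˣ) : ℤ) :=
    by simp [zpow_sub_one]
  have hsplit : ∀ E s : ℤ,
      (single (E + 2 * k) s : LaurentSeries ℤ) = single E s * single (2 * k) 1 :=
    fun E s => by rw [single_mul_single, mul_one]
  rw [eulerTerm, eulerTerm, eulerTerm, hpoch, neg_mul, ← mul_assoc, single_mul_single, one_mul,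
    ← neg_mul, ← single_neg, hsign,
    show k * (k + 1) + 2 * (N + 1) * k = k * (k + 1) + 2 * N * k + 2 * k by ring,
    show 2 * (N + 1) + ((k - 1) * (k - 1 + 1) + 2 * (N + 1) * (k - 1)) =
      k * (k + 1) + 2 * N * k by ring, hsplit]
  ring

theorem eulerSeries_eq_mul_succ (N : ℤ) :
    eulerSeries N = (1 - single (2 * (N + 1)) 1) * eulerSeries (N + 1) := by
  have hfam : eulerFamily N - eulerFamily (N + 1) = SummableFamily.Equiv (Equiv.addRight 1)
      ((-single (2 * (N + 1)) 1 : LaurentSeries ℤ) • eulerFamily (N + 1)) := by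
    ext1 k
    simp [of_symm_smul_of_eq_mul, eulerTerm_sub_eulerTerm_succ, ← sub_eq_add_neg]
  have hsum := congrArg SummableFamily.hsum hfam
  rw [SummableFamily.hsum_sub, SummableFamily.hsum_equiv, SummableFamily.hsum_smul] at hsum
  rw [eulerSeries, eulerSeries]
  linear_combination hsum

theorem qPochhammerInv_mul_eulerSeries_zero (N : ℤ) :
    qPochhammerInv N * eulerSeries 0 = eulerSeries N := by
  refine eq_of_recursion (x := fun N => qPochhammerInv N * eulerSeries 0) (fun N => ?_)
    eulerSeries_eq_mul_succ (by simp [qPochhammerInv_zero]) N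
  rw [qPochhammerInv_eq_mul_succ N, mul_assoc]

theorem eulerSeries_zero_ne_zero : eulerSeries 0 ≠ 0 := by
  refine ne_of_apply_ne (coeff · 0) ?_
  have hterm : ∀ k ≠ 0, (eulerTerm 0 k).coeff 0 = 0 := by
    intro k hk
    rcases lt_or_gt_of_ne hk with hk | hk
    · simp [eulerTerm, qPochhammerInv_of_neg hk]
    · exact coeff_single_mul_eq_zero_of_lt (qPochhammerInv_mem_rangeS k) _ (by nlinarith)
  simp only [eulerSeries, SummableFamily.coeff_hsum, eulerFamily_apply]
  rw [finsum_eq_single _ 0 hterm]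
  simp [eulerTerm, qPochhammerInv_zero]

noncomputable def tetraFamily (m e : ℤ) : SummableFamily ℤ ℤ ℤ :=
  .ofLowerBound (tetraTerm m e) (fun n => n * (n + 1) - (2 * n + e) * m)
    ((Int.tendsto_cofinite_quadratic (1 - 2 * m) (-(e * m))).congr fun n => by ring)
    fun n _ => by
      rw [tetraTerm, mul_assoc]
      exact coeff_single_mul_eq_zero_of_lt
        (mul_mem (qPochhammerInv_mem_rangeS n) (qPochhammerInv_mem_rangeS (n + e))) _

@[simp]
theorem tetraFamily_apply (m e n : ℤ) : tetraFamily m e n = tetraTerm m e n := rfl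

noncomputable def tetrahedronIndex (m e : ℤ) : LaurentSeries ℤ := (tetraFamily m e).hsum

theorem tetraTerm_eq_single_mul (m e n : ℤ) :
    tetraTerm m e n = single (-e) ((((-1 : ℤˣ) ^ (-e) : ℤˣ) : ℤ)) *
      tetraTerm (m + e) (-e) (n + e) := by
  rw [tetraTerm, tetraTerm, ← mul_assoc, ← mul_assoc, single_mul_single, ← Units.val_mul,
    ← zpow_add, show -e + (n + e) = n by ring, show n + e + -e = n by ring,
    show -e + ((n + e) * (n + e + 1) - (2 * (n + e) + -e) * (m + e)) =
      n * (n + 1) - (2 * n + e) * m by ring, mul_right_comm]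

theorem tetrahedronIndex_shear (m e : ℤ) :
    tetrahedronIndex m e = single (-e) ((((-1 : ℤˣ) ^ (-e) : ℤˣ) : ℤ)) *
      tetrahedronIndex (m + e) (-e) := by
  have hfam : tetraFamily m e = SummableFamily.Equiv (Equiv.addRight e).symm
      (single (-e) ((((-1 : ℤˣ) ^ (-e) : ℤˣ) : ℤ)) • tetraFamily (m + e) (-e)) := by
    ext1 n
    simp [of_symm_smul_of_eq_mul, tetraTerm_eq_single_mul m e n]
  rw [tetrahedronIndex, hfam, SummableFamily.hsum_equiv, SummableFamily.hsum_smul,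
    tetrahedronIndex]

/-- The `(n, k)` summand of `(q;q)_∞ · I_Δ(m, e)`, after expanding `(q;q)_∞ / (q;q)_{n+e}` by
Euler's formula. -/
noncomputable def pairTerm (m e : ℤ) (p : ℤ × ℤ) : LaurentSeries ℤ :=
  single (p.1 * (p.1 + 1) - (2 * p.1 + e) * m + p.2 * (p.2 + 1) + 2 * (p.1 + e) * p.2)
    ((((-1 : ℤˣ) ^ (p.1 + p.2) : ℤˣ) : ℤ)) * (qPochhammerInv p.1 * qPochhammerInv p.2)

theorem pairTerm_swap (m e n k : ℤ) : pairTerm m e (n, k) = pairTerm (-e) (-m) (k, n) := by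
  rw [pairTerm, pairTerm, add_comm n k, mul_comm (qPochhammerInv n)]
  ring_nf

theorem coeff_pairTerm_eq_zero_of_lt (m e n k : ℤ) {g : ℤ}
    (hg : g < n * (n + 1) - (2 * n + e) * m + (k * (k + 1) + 2 * e * k)) :
    (pairTerm m e (n, k)).coeff g = 0 := by
  rcases lt_or_ge n 0 with hn | hn
  · simp [pairTerm, qPochhammerInv_of_neg hn]
  rcases lt_or_ge k 0 with hk | hk
  · simp [pairTerm, qPochhammerInv_of_neg hk]
  exact coeff_single_mul_eq_zero_of_lt
    (mul_mem (qPochhammerInv_mem_rangeS n) (qPochhammerInv_mem_rangeS k)) _ (by nlinarith)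

noncomputable def pairFamily (m e : ℤ) : SummableFamily ℤ ℤ (ℤ × ℤ) :=
  .ofLowerBound (pairTerm m e)
    (fun p => p.1 * (p.1 + 1) - (2 * p.1 + e) * m + (p.2 * (p.2 + 1) + 2 * e * p.2))
    (Tendsto.cofinite_prod_add (f := fun n => n * (n + 1) - (2 * n + e) * m)
      (g := fun k => k * (k + 1) + 2 * e * k)
      ((Int.tendsto_cofinite_quadratic (1 - 2 * m) (-(e * m))).congr fun n => by ring)
      ((Int.tendsto_cofinite_quadratic (2 * e + 1) 0).congr fun k => by ring))
    fun ⟨n, k⟩ _ hg => coeff_pairTerm_eq_zero_of_lt m e n k hg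

@[simp]
theorem pairFamily_apply (m e : ℤ) (p : ℤ × ℤ) : pairFamily m e p = pairTerm m e p := rfl

theorem single_mul_qPochhammerInv_mul_eulerTerm (m e n k : ℤ) :
    single (n * (n + 1) - (2 * n + e) * m) ((((-1 : ℤˣ) ^ n : ℤˣ) : ℤ)) * qPochhammerInv n *
      eulerTerm (n + e) k = pairTerm m e (n, k) := by
  rw [eulerTerm, pairTerm, mul_mul_mul_comm, single_mul_single, ← Units.val_mul, ← zpow_add]
  ring_nf

theorem eulerSeries_zero_mul_tetrahedronIndex (m e : ℤ) :
    eulerSeries 0 * tetrahedronIndex m e = (pairFamily m e).hsum := by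
  rw [tetrahedronIndex, ← SummableFamily.hsum_smul]
  refine SummableFamily.hsum_eq_hsum_of_rows _ (fun n =>
    (single (n * (n + 1) - (2 * n + e) * m) ((((-1 : ℤˣ) ^ n : ℤˣ) : ℤ)) *
      qPochhammerInv n) • eulerFamily (n + e)) (fun n k => ?_) _ (fun n => ?_)
  · simp [of_symm_smul_of_eq_mul, single_mul_qPochhammerInv_mul_eulerTerm]
  · rw [SummableFamily.hsum_smul, ← eulerSeries, ← qPochhammerInv_mul_eulerSeries_zero (n + e)]
    simp only [SummableFamily.smul_apply, of_symm_smul_of_eq_mul, tetraFamily_apply, tetraTerm]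
    ring

theorem tetrahedronIndex_duality (m e : ℤ) :
    tetrahedronIndex m e = tetrahedronIndex (-e) (-m) := by
  refine mul_left_cancel₀ eulerSeries_zero_ne_zero ?_
  rw [eulerSeries_zero_mul_tetrahedronIndex, eulerSeries_zero_mul_tetrahedronIndex,
    ← SummableFamily.hsum_equiv (Equiv.prodComm ℤ ℤ) (pairFamily (-e) (-m))]
  congr 1
  ext1 ⟨n, k⟩
  simp [pairTerm_swap m e n k]

theorem tetrahedronIndex_triality (m e : ℤ) :
    tetrahedronIndex m e = single (-e) ((((-1 : ℤˣ) ^ (-e) : ℤˣ) : ℤ)) *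
      tetrahedronIndex e (-e - m) := by
  rw [tetrahedronIndex_shear, tetrahedronIndex_duality (m + e), neg_neg,
    show -(m + e) = -e - m by ring]

/-- the tetrahedron index satisfies the 'triality' symmetry
`I_Δ(m,e)(q) = (−q^{1/2})^{−e} I_Δ(e, −e−m)(q)` as an identity of formal Laurent
series in `q^{1/2}`, i.e. coefficientwise in every degree `d` (each coefficient of
either side is a sum with only finitely many nonzero terms, and
`(−q^{1/2})^{−e} = (−1)^{−e}·X^{−e}` is the monomial `single (−e) ((−1)^{−e})`). -/
theorem tetrahedron_index_triality (m e : ℤ) (d : ℤ) :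
    (∑' n : ℤ, (tetraTerm m e n).coeff d) =
      ∑' n : ℤ,
        (HahnSeries.single (-e) ((((-1 : ℤˣ) ^ (-e) : ℤˣ) : ℤ)) *
          tetraTerm e (-e - m) n).coeff d := by
  calc ∑' n : ℤ, (tetraTerm m e n).coeff d
      = (tetrahedronIndex m e).coeff d := (tetraFamily m e).tsum_coeff d
    _ = (single (-e) ((((-1 : ℤˣ) ^ (-e) : ℤˣ) : ℤ)) *
          tetrahedronIndex e (-e - m)).coeff d := by
        rw [tetrahedronIndex_triality]
    _ = _ := by
        rw [tetrahedronIndex, ← SummableFamily.hsum_smul, ← SummableFamily.tsum_coeff]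
        simp [of_symm_smul_of_eq_mul]
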